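/- arXiv:2005.06316 — 3 statements merged into one kernel-verified Lean document; each statement's English description precedes it below -/
import Mathlib

section
/- Let g : V → V → ℝ^d, let h : V → ℝ^d be a rank-1 tensor field on the vertices, and let U be an orthogonal d×d real matrix. Define g'(i,j) = U · g(i,j) and h'(j) = U · h(j). Define the generalized contraction ((g⊗g) ⊙ h) : V → ℝ^d componentwise by ((g⊗g) ⊙ h)(i)(k₁) = Σ_{j,l ∈ V} Σ_{k₂} g(i,j)(k₁) · g(j,l)(k₂) · h(l)(k₂). Then this contraction is rank-1 equivariant: for all i ∈ V, ((g'⊗g') ⊙ h')(i) = U · ((g⊗g) ⊙ h)(i). -/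
/-!
Carrying out the sums over `l` and `k₂` first, `((g⊗g) ⊙ h)(i) = ∑ⱼ sⱼ • g(i,j)` with scalars
`sⱼ = ∑ₗ ⟪g(j,l), h(l)⟫`. An orthogonal `U` preserves inner products, hence every `sⱼ`, and being
linear it commutes with the linear combination over `j`.
-/

open Matrix

/-- Matrix–vector product, viewed as acting on Euclidean space. -/
def matVec {d : ℕ} (U : Matrix (Fin d) (Fin d) ℝ) (v : EuclideanSpace ℝ (Fin d)) :
    EuclideanSpace ℝ (Fin d) := WithLp.toLp 2 (U.mulVec v)

namespace Matrix.UnitaryGroup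

variable {𝕜 n : Type*} [RCLike 𝕜] [Fintype n] [DecidableEq n]

noncomputable def toEuclideanLinearIsometry (U : unitaryGroup n 𝕜) :
    EuclideanSpace 𝕜 n →ₗᵢ[𝕜] EuclideanSpace 𝕜 n where
  toLinearMap := toEuclideanLin (U : Matrix n n 𝕜)
  -- `toEuclideanCLM` is a ⋆-algebra map, so it sends unitary matrices to unitary operators.
  norm_map' := (toEuclideanCLM (n := n) (𝕜 := 𝕜) U).norm_map_of_mem_unitary
    (Unitary.map_mem _ U.2)

end Matrix.UnitaryGroup

section TensorContraction

variable {V E F : Type*} [Fintype V] [NormedAddCommGroup E] [InnerProductSpace ℝ E]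
  [NormedAddCommGroup F] [InnerProductSpace ℝ F]

/-- The paper's `((g⊗g) ⊙ h)(i)` in coordinate-free form. -/
noncomputable def tensorContraction (g : V → V → E) (h : V → E) (i : V) : E :=
  ∑ j, (∑ l, inner ℝ (g j l) (h l)) • g i j

theorem tensorContraction_map (L : E →ₗᵢ[ℝ] F) (g : V → V → E) (h : V → E) (i : V) :
    tensorContraction (fun i j ↦ L (g i j)) (fun l ↦ L (h l)) i = L (tensorContraction g h i) := by
  simp [tensorContraction, LinearIsometry.inner_map_map]

theorem toLp_sum_eq_tensorContraction {d : ℕ} (g : V → V → EuclideanSpace ℝ (Fin d))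
    (h : V → EuclideanSpace ℝ (Fin d)) (i : V) :
    WithLp.toLp 2 (fun k₁ : Fin d ↦ ∑ j, ∑ l, ∑ k₂, g i j k₁ * g j l k₂ * h l k₂) =
      tensorContraction g h i := by
  ext k₁
  simp [tensorContraction, PiLp.inner_apply, Finset.mul_sum, mul_comm, mul_assoc]

end TensorContraction

/-- The generalized contraction
`((g⊗g) ⊙ h)(i)(k₁) = Σ_{j,l} Σ_{k₂} g(i,j)(k₁) * g(j,l)(k₂) * h(l)(k₂)`
is rank-1 equivariant under simultaneous orthogonal transformations of `g` and `h`. -/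
theorem tensor_power_contraction_rank1_equivariant
    {V : Type*} [Fintype V] {d : ℕ}
    (g : V → V → EuclideanSpace ℝ (Fin d))
    (h : V → EuclideanSpace ℝ (Fin d))
    (U : Matrix.orthogonalGroup (Fin d) ℝ)
    (g' : V → V → EuclideanSpace ℝ (Fin d))
    (h' : V → EuclideanSpace ℝ (Fin d))
    (hg' : ∀ i j, g' i j = matVec (U : Matrix (Fin d) (Fin d) ℝ) (g i j))
    (hh' : ∀ j, h' j = matVec (U : Matrix (Fin d) (Fin d) ℝ) (h j))
    (i : V) :
    (WithLp.toLp 2 (fun k₁ : Fin d => ∑ j : V, ∑ l : V, ∑ k₂ : Fin d, g' i j k₁ * g' j l k₂ * h' l k₂) :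
        EuclideanSpace ℝ (Fin d))
      = matVec (U : Matrix (Fin d) (Fin d) ℝ)
          (WithLp.toLp 2 (fun k₁ : Fin d => ∑ j : V, ∑ l : V, ∑ k₂ : Fin d, g i j k₁ * g j l k₂ * h l k₂)) := by
  set L := UnitaryGroup.toEuclideanLinearIsometry U
  have hL : ⇑L = matVec (U : Matrix (Fin d) (Fin d) ℝ) := rfl
  have hg : g' = fun i j ↦ L (g i j) := by ext1 i; ext1 j; rw [hg', hL]
  have hh : h' = fun l ↦ L (h l) := by ext1 l; rw [hh', hL]
  rw [toLp_sum_eq_tensorContraction, toLp_sum_eq_tensorContraction, hg, hh,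
    tensorContraction_map, hL]
end

section
/- Let x : V → ℝ^d, w : V → V → ℝ, and A : V → V → ℝ with A(i,i) = 0 for all i, and suppose x(l) ≠ x(i) whenever w(i,l)·A(i,l) ≠ 0. Let M_i(x) = Σ_{l ∈ V} ((x(l) − x(i))/‖x(l) − x(i)‖) ⊗ ((x(l) − x(i))/‖x(l) − x(i)‖) · w(i,l) · A(i,l) and suppose M_i(x) is invertible for every i. Define D(x)(i,j) = M_i(x)⁻¹ · ((x(j) − x(i))/‖x(j) − x(i)‖²) · w(i,j) · A(i,j) ∈ ℝ^d (set to 0 when w(i,j)·A(i,j) = 0). Then D is translation invariant and orthogonal-transformation equivariant: for every t ∈ ℝ^d and orthogonal d×d matrix U, and all i,j ∈ V, D(fun v => U·x(v) + t)(i,j) = U · D(x)(i,j). -/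
/-! An orthogonal map `U` followed by a translation preserves the differences `x l - x i` up to
applying `U`, and hence also their lengths. So `M_i` becomes `U M_i Uᵀ`, whose inverse is
`U M_i⁻¹ Uᵀ`, and in `D` the factor `Uᵀ U = 1` cancels against the `U` applied to `x j - x i`. -/

open Matrix

/-- Outer product of two vectors: the matrix with entries `v k * w m`. -/
def outer {d : ℕ} (v w : EuclideanSpace ℝ (Fin d)) : Matrix (Fin d) (Fin d) ℝ :=
  Matrix.of fun k m => v k * w m

/-- The matrix `M_i(x) = Σ_l ((x l − x i)/‖x l − x i‖) ⊗ ((x l − x i)/‖x l − x i‖) ⬝ w(i,l) ⬝ A(i,l)`. -/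
noncomputable def Mmat {V : Type*} [Fintype V] {d : ℕ}
    (w A : V → V → ℝ) (x : V → EuclideanSpace ℝ (Fin d)) (i : V) :
    Matrix (Fin d) (Fin d) ℝ :=
  ∑ l : V, (w i l * A i l) •
    outer (‖x l - x i‖⁻¹ • (x l - x i)) (‖x l - x i‖⁻¹ • (x l - x i))

/-- The IsoAM `D(x)(i,j) = M_i(x)⁻¹ ⬝ ((x j − x i)/‖x j − x i‖²) ⬝ w(i,j) ⬝ A(i,j)`
(equal to `0` whenever `w(i,j) ⬝ A(i,j) = 0`, since the scalar factor vanishes). -/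
noncomputable def Dvec {V : Type*} [Fintype V] {d : ℕ}
    (w A : V → V → ℝ) (x : V → EuclideanSpace ℝ (Fin d)) (i j : V) :
    EuclideanSpace ℝ (Fin d) :=
  (w i j * A i j / ‖x j - x i‖ ^ 2) • matVec (Mmat w A x i)⁻¹ (x j - x i)

section matVec

variable {d : ℕ}

lemma matVec_sub (U : Matrix (Fin d) (Fin d) ℝ) (a b : EuclideanSpace ℝ (Fin d)) :
    matVec U (a - b) = matVec U a - matVec U b := by
  simp [matVec, mulVec_sub]

lemma matVec_smul (U : Matrix (Fin d) (Fin d) ℝ) (c : ℝ) (a : EuclideanSpace ℝ (Fin d)) :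
    matVec U (c • a) = c • matVec U a := by
  simp [matVec, mulVec_smul]

lemma matVec_matVec (U M : Matrix (Fin d) (Fin d) ℝ) (a : EuclideanSpace ℝ (Fin d)) :
    matVec U (matVec M a) = matVec (U * M) a := by
  simp [matVec, mulVec_mulVec]

lemma norm_matVec_of_mem_orthogonalGroup {U : Matrix (Fin d) (Fin d) ℝ}
    (hU : U ∈ orthogonalGroup (Fin d) ℝ) (v : EuclideanSpace ℝ (Fin d)) :
    ‖matVec U v‖ = ‖v‖ := by
  have hUU : Uᵀ * U = 1 := (mem_orthogonalGroup_iff' _ _).mp hU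
  have hsq : ‖matVec U v‖ ^ 2 = ‖v‖ ^ 2 := by
    rw [← real_inner_self_eq_norm_sq, ← real_inner_self_eq_norm_sq]
    simp only [EuclideanSpace.inner_eq_star_dotProduct, matVec, star_trivial]
    rw [dotProduct_mulVec, vecMul_mulVec, hUU, vecMul_one]
  exact (sq_eq_sq₀ (norm_nonneg _) (norm_nonneg _)).mp hsq

lemma outer_matVec (U : Matrix (Fin d) (Fin d) ℝ) (a b : EuclideanSpace ℝ (Fin d)) :
    outer (matVec U a) (matVec U b) = U * outer a b * Uᵀ := by
  ext k m
  simp only [outer, matVec, mul_apply, of_apply, mulVec, dotProduct, transpose_apply,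
    Finset.sum_mul, Finset.mul_sum]
  exact Finset.sum_congr rfl fun p _ => Finset.sum_congr rfl fun q _ => by ring

end matVec

lemma Matrix.inv_conj_of_mem_orthogonalGroup {n R : Type*} [Fintype n] [DecidableEq n]
    [CommRing R] {U : Matrix n n R} (hU : U ∈ orthogonalGroup n R) (M : Matrix n n R) :
    (U * M * Uᵀ)⁻¹ = U * M⁻¹ * Uᵀ := by
  rw [mul_inv_rev, mul_inv_rev, inv_eq_left_inv ((mem_orthogonalGroup_iff' _ _).mp hU),
    inv_eq_left_inv ((mem_orthogonalGroup_iff _ _).mp hU), mul_assoc]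

lemma Mmat_matVec_add_const {V : Type*} [Fintype V] {d : ℕ} (w A : V → V → ℝ)
    (x : V → EuclideanSpace ℝ (Fin d)) {U : Matrix (Fin d) (Fin d) ℝ}
    (hU : U ∈ orthogonalGroup (Fin d) ℝ) (t : EuclideanSpace ℝ (Fin d)) (i : V) :
    Mmat w A (fun v => matVec U (x v) + t) i = U * Mmat w A x i * Uᵀ := by
  simp only [Mmat, Finset.mul_sum, Finset.sum_mul, add_sub_add_right_eq_sub, ← matVec_sub,
    norm_matVec_of_mem_orthogonalGroup hU, ← matVec_smul, outer_matVec, Matrix.mul_smul,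
    Matrix.smul_mul]

theorem Dvec_isometric_equivariant_general
    {V : Type*} [Fintype V] {d : ℕ}
    (x : V → EuclideanSpace ℝ (Fin d))
    (w A : V → V → ℝ)
    (U : Matrix.orthogonalGroup (Fin d) ℝ) (t : EuclideanSpace ℝ (Fin d)) (i j : V) :
    Dvec w A (fun v => matVec (U : Matrix (Fin d) (Fin d) ℝ) (x v) + t) i j
      = matVec (U : Matrix (Fin d) (Fin d) ℝ) (Dvec w A x i j) := by
  have hU := U.prop
  have hUU : (U : Matrix (Fin d) (Fin d) ℝ)ᵀ * U = 1 := (mem_orthogonalGroup_iff' _ _).mp hU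
  simp only [Dvec, Mmat_matVec_add_const w A x hU, add_sub_add_right_eq_sub, ← matVec_sub,
    norm_matVec_of_mem_orthogonalGroup hU, matVec_smul, matVec_matVec]
  rw [Matrix.inv_conj_of_mem_orthogonalGroup hU, mul_assoc, mul_assoc, hUU, mul_one]

/-- The IsoAM `D` is translation invariant and orthogonal-transformation
equivariant: `D(U∘x + t)(i,j) = U ⬝ D(x)(i,j)`. -/
theorem Dvec_isometric_equivariant
    {V : Type*} [Fintype V] {d : ℕ}
    (x : V → EuclideanSpace ℝ (Fin d))
    (w A : V → V → ℝ)
    (hA : ∀ i, A i i = 0)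
    (hne : ∀ i l, w i l * A i l ≠ 0 → x l ≠ x i)
    (hInv : ∀ i, IsUnit (Mmat w A x i))
    (U : Matrix.orthogonalGroup (Fin d) ℝ) (t : EuclideanSpace ℝ (Fin d)) (i j : V) :
    Dvec w A (fun v => matVec (U : Matrix (Fin d) (Fin d) ℝ) (x v) + t) i j
      = matVec (U : Matrix (Fin d) (Fin d) ℝ) (Dvec w A x i j) :=
  Dvec_isometric_equivariant_general x w A U t i j
end

section
/- Let x : V → ℝ^d, let i ∈ V, and let w : V → V → ℝ and A : V → V → ℝ satisfy w(i,l)·A(i,l) ≥ 0 for all l, with x(l) ≠ x(i) whenever w(i,l)·A(i,l) > 0. Define M_i = Σ_{l ∈ V} ((x(l) − x(i))/‖x(l) − x(i)‖) ⊗ ((x(l) − x(i))/‖x(l) − x(i)‖) · w(i,l) · A(i,l). If the set of vectors { x(l) − x(i) : l ∈ V, w(i,l)·A(i,l) > 0 } spans ℝ^d, then M_i is positive definite; in particular, M_i is invertible. -/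
open Matrix

/-!
With `c l = w(i,l) A(i,l)` and `u l` the normalized difference, `vᵀ M_i v = Σ_l c l ⟪u l, v⟫²` is
a sum of nonnegative terms. If it vanishes, `v` is orthogonal to every `u l` of positive weight.
Normalizing does not change the span (a zero difference stays zero), so `v` is orthogonal to all
of `ℝ^d`, i.e. `v = 0`.
-/

theorem dotProduct_sum_smul_vecMulVec_self_mulVec {ι n R : Type*} [Fintype ι] [Fintype n]
    [CommRing R] (c : ι → R) (u : ι → n → R) (v : n → R) :
    v ⬝ᵥ (∑ l, c l • vecMulVec (u l) (u l)) *ᵥ v = ∑ l, c l * (u l ⬝ᵥ v) ^ 2 := by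
  simp only [sum_mulVec, dotProduct_sum, smul_mulVec, dotProduct_smul, vecMulVec_mulVec,
    op_smul_eq_smul, dotProduct_comm v (u _), smul_eq_mul, sq]

theorem eq_zero_of_forall_inner_eq_zero_of_span_eq_top {𝕜 E : Type*} [RCLike 𝕜]
    [NormedAddCommGroup E] [InnerProductSpace 𝕜 E] {s : Set E} (hs : Submodule.span 𝕜 s = ⊤)
    {v : E} (hv : ∀ y ∈ s, inner 𝕜 v y = 0) : v = 0 := by
  have := LinearMap.ext_on hs (f := innerₛₗ 𝕜 v) (g := 0) hv
  simpa using LinearMap.congr_fun this v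

theorem span_image_inv_norm_smul {E : Type*} [NormedAddCommGroup E] [NormedSpace ℝ E]
    (s : Set E) : Submodule.span ℝ ((fun y => ‖y‖⁻¹ • y) '' s) = Submodule.span ℝ s := by
  apply le_antisymm
  · rw [Submodule.span_le]
    rintro _ ⟨y, hy, rfl⟩
    exact Submodule.smul_mem _ _ (Submodule.subset_span hy)
  · rw [Submodule.span_le]
    intro y hy
    obtain rfl | hy0 := eq_or_ne y 0
    · exact Submodule.zero_mem _
    · rw [← smul_inv_smul₀ (norm_ne_zero_iff.mpr hy0) y]
      exact Submodule.smul_mem _ _ (Submodule.subset_span ⟨y, hy, rfl⟩)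

theorem posDef_sum_smul_vecMulVec_self {ι n : Type*} [Fintype ι] [Fintype n]
    (c : ι → ℝ) (u : ι → EuclideanSpace ℝ n) (hc : ∀ l, 0 ≤ c l)
    (hspan : Submodule.span ℝ (u '' {l | 0 < c l}) = ⊤) :
    (∑ l, c l • vecMulVec (u l).ofLp (u l).ofLp).PosDef := by
  have hsemidef : (∑ l, c l • vecMulVec (u l).ofLp (u l).ofLp).PosSemidef :=
    posSemidef_sum _ fun l _ => by
      simpa using (posSemidef_vecMulVec_self_star (u l).ofLp).smul (hc l)
  refine PosDef.of_dotProduct_mulVec_pos hsemidef.isHermitian fun v hv => ?_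
  rw [star_trivial, dotProduct_sum_smul_vecMulVec_self_mulVec]
  have hterm : ∀ l, 0 ≤ c l * ((u l).ofLp ⬝ᵥ v) ^ 2 := fun l => mul_nonneg (hc l) (sq_nonneg _)
  refine (Finset.sum_nonneg fun l _ => hterm l).lt_of_ne fun hzero => hv ?_
  have horth : ∀ l, 0 < c l → (u l).ofLp ⬝ᵥ v = 0 := fun l hl => by
    have := (Finset.sum_eq_zero_iff_of_nonneg fun l _ => hterm l).1 hzero.symm l
      (Finset.mem_univ l)
    simpa [hl.ne'] using this
  have hv_orth : ∀ y ∈ u '' {l | 0 < c l}, inner ℝ (WithLp.toLp 2 v) y = 0 := by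
    rintro _ ⟨l, hl, rfl⟩
    simpa [EuclideanSpace.inner_eq_star_dotProduct, dotProduct_comm] using horth l hl
  simpa using eq_zero_of_forall_inner_eq_zero_of_span_eq_top hspan hv_orth

theorem Mmat_posDef_of_span_general
    {V : Type*} [Fintype V] {d : ℕ}
    (x : V → EuclideanSpace ℝ (Fin d)) (i : V)
    (w A : V → V → ℝ)
    (hnonneg : ∀ l, 0 ≤ w i l * A i l)
    (hspan : Submodule.span ℝ
        {y : EuclideanSpace ℝ (Fin d) | ∃ l : V, 0 < w i l * A i l ∧ y = x l - x i} = ⊤) :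
    (∀ v : Fin d → ℝ, v ≠ 0 → 0 < v ⬝ᵥ (Mmat w A x i).mulVec v)
      ∧ IsUnit (Mmat w A x i) := by
  set c : V → ℝ := fun l => w i l * A i l
  set u : V → EuclideanSpace ℝ (Fin d) := fun l => ‖x l - x i‖⁻¹ • (x l - x i)
  have hspan_normalized : Submodule.span ℝ (u '' {l | 0 < c l}) = ⊤ := by
    rw [← Set.image_image (fun y => ‖y‖⁻¹ • y), span_image_inv_norm_smul, ← hspan]
    congr 1
    ext y
    simp [eq_comm, c]
  have hpd : (Mmat w A x i).PosDef := posDef_sum_smul_vecMulVec_self c u hnonneg hspan_normalized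
  exact ⟨fun v hv => by simpa using hpd.dotProduct_mulVec_pos hv, hpd.isUnit⟩

/-- If the weights `w(i,l) ⬝ A(i,l)` are nonnegative and the vectors
`x l − x i` with strictly positive weight span `ℝ^d`, then `M_i` is positive definite
(`vᵀ M_i v > 0` for every nonzero `v`); in particular `M_i` is invertible. -/
theorem Mmat_posDef_of_span
    {V : Type*} [Fintype V] {d : ℕ}
    (x : V → EuclideanSpace ℝ (Fin d)) (i : V)
    (w A : V → V → ℝ)
    (hnonneg : ∀ l, 0 ≤ w i l * A i l)
    (hne : ∀ l, 0 < w i l * A i l → x l ≠ x i)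
    (hspan : Submodule.span ℝ
        {y : EuclideanSpace ℝ (Fin d) | ∃ l : V, 0 < w i l * A i l ∧ y = x l - x i} = ⊤) :
    (∀ v : Fin d → ℝ, v ≠ 0 → 0 < v ⬝ᵥ (Mmat w A x i).mulVec v)
      ∧ IsUnit (Mmat w A x i) :=
  Mmat_posDef_of_span_general x i w A hnonneg hspan
end
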